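/- arXiv:1805.09777 — 3 statements merged into one kernel-verified Lean document; each statement's English description precedes it below -/
import Mathlib

section
/- Among the 2925 three-element subsets of Σ, exactly 45 span a linear subspace of ℝ^6 of dimension at most 2, and every such three-element subset {a, b, c} satisfies a + b + c = 0. -/
/-!
In the coordinates `q ↦ (q₀ √3/6, q₁/2, …, q₅/2)` the roots, `μ` and all weights are integral,
so `Σ` becomes an explicit set of 27 integer vectors, closed under the root reflections; this
and every other finite fact below is a kernel computation. All weights have squared length
`4/3`, and two distinct weights have inner product `1/3` or `-2/3`. The Gram determinant of
three distinct weights therefore vanishes only if all three inner products are `-2/3`, and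
then `‖a + b + c‖² = 3 · 4/3 - 6 · 2/3 = 0`. So a triple spans a plane iff it sums to zero,
and the 45 zero-sum triples are counted in the integer model.
-/

noncomputable section

/-- `ℝ^6` with the standard inner product. -/
abbrev E6V : Type := EuclideanSpace ℝ (Fin 6)

/-- Turn a plain function `Fin 6 → ℝ` into a vector of `E6V`. -/
def toE (f : Fin 6 → ℝ) : E6V := (WithLp.equiv 2 (Fin 6 → ℝ)).symm f

/-- The standard basis vector `e i`. -/
def stdE (i : Fin 6) : E6V := EuclideanSpace.single i 1

/-- The set `Φ⁺` of positive roots of `E₆`: the 20 vectors `e i ± e j` for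
`2 ≤ i < j ≤ 6` (zero-based: `1 ≤ i < j ≤ 5`), together with the 16 vectors
`(√3/2, ±1/2, ±1/2, ±1/2, ±1/2, ±1/2)` with an even number of minus signs. -/
def PhiPlus : Set E6V :=
  {v | ∃ i j : Fin 6, 0 < (i : ℕ) ∧ i < j ∧ (v = stdE i + stdE j ∨ v = stdE i - stdE j)} ∪
  {v | ∃ s : Fin 5 → ℝ, (∀ k, s k = 1 ∨ s k = -1) ∧
      Even (Finset.univ.filter (fun k => s k = -1)).card ∧
      v = toE (Fin.cons (Real.sqrt 3 / 2) (fun k => s k / 2))}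

/-- The set `Φ = Φ⁺ ∪ (−Φ⁺)` of all roots of `E₆`. -/
def Phi : Set E6V := PhiPlus ∪ (-PhiPlus)

/-- Orthogonal reflection in the vector `v`. -/
def reflectIn (v : E6V) (x : E6V) : E6V :=
  x - (2 * (inner ℝ x v : ℝ) / (inner ℝ v v : ℝ)) • v

/-- The minuscule weight `μ = ((2√3)/3, 0, 0, 0, 0, 0)`. -/
def muE6 : E6V := toE ![2 * Real.sqrt 3 / 3, 0, 0, 0, 0, 0]

/-- The 27 weights of the minuscule representation of `E₆`: everything obtained
from `μ` by applying at most two root reflections. -/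
def SigmaE6 : Set E6V :=
  {muE6} ∪ {x | ∃ v ∈ Phi, x = reflectIn v muE6} ∪
    {x | ∃ v ∈ Phi, ∃ w ∈ Phi, x = reflectIn v (reflectIn w muE6)}

open Finset Module Submodule
open scoped Pointwise RealInnerProductSpace

theorem finrank_span_triple_le_two_of_add_add_eq_zero {K V : Type*} [DivisionRing K]
    [AddCommGroup V] [Module K V] {a b c : V} (h : a + b + c = 0) :
    finrank K (span K ({a, b, c} : Set V)) ≤ 2 := by
  have hc : c = -(a + b) := eq_neg_of_add_eq_zero_right h
  have hspan : span K ({a, b, c} : Set V) = span K {a, b} := by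
    refine le_antisymm (span_le.2 ?_) (span_mono (by simp [Set.insert_subset_iff]))
    simp only [Set.insert_subset_iff, Set.singleton_subset_iff, SetLike.mem_coe]
    refine ⟨subset_span (by simp), subset_span (by simp), hc ▸ neg_mem (add_mem ?_ ?_)⟩ <;>
      exact subset_span (by simp)
  classical
  calc finrank K (span K ({a, b, c} : Set V)) = finrank K (span K ({a, b} : Set V)) := by
        rw [hspan]
    _ ≤ 2 := by
      have hle := finrank_span_finset_le_card (R := K) ({a, b} : Finset V)
      rw [Finset.coe_pair] at hle
      exact hle.trans Finset.card_le_two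

theorem add_add_eq_zero_of_finrank_span_le_two {E : Type*} [NormedAddCommGroup E]
    [InnerProductSpace ℝ E] {a b c : E} (ha : ⟪a, a⟫ = 4 / 3) (hb : ⟪b, b⟫ = 4 / 3)
    (hc : ⟪c, c⟫ = 4 / 3) (hab : ⟪a, b⟫ = 1 / 3 ∨ ⟪a, b⟫ = -2 / 3)
    (hac : ⟪a, c⟫ = 1 / 3 ∨ ⟪a, c⟫ = -2 / 3) (hbc : ⟪b, c⟫ = 1 / 3 ∨ ⟪b, c⟫ = -2 / 3)
    (h : finrank ℝ (span ℝ ({a, b, c} : Set E)) ≤ 2) : a + b + c = 0 := by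
  have hdep : ¬LinearIndependent ℝ ![a, b, c] := fun hli => by
    have h3 := finrank_span_eq_card hli
    rw [Matrix.range_cons, Matrix.range_cons_cons_empty, Set.singleton_union] at h3
    simp only [Fintype.card_fin] at h3
    omega
  have hdet : (Matrix.gram ℝ ![a, b, c]).det = 0 := by
    by_contra hne
    exact hdep (Matrix.det_gram_ne_zero_iff_linearIndependent.1 hne)
  rw [Matrix.det_fin_three] at hdet
  simp only [Matrix.gram_apply, Matrix.cons_val_zero, Matrix.cons_val_one,
    Matrix.cons_val_two, Matrix.head_cons, Matrix.tail_cons] at hdet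
  rw [real_inner_comm a b, real_inner_comm a c, real_inner_comm b c, ha, hb, hc] at hdet
  have hoff : ⟪a, b⟫ = -2 / 3 ∧ ⟪a, c⟫ = -2 / 3 ∧ ⟪b, c⟫ = -2 / 3 := by
    rcases hab with h1 | h1 <;> rcases hac with h2 | h2 <;> rcases hbc with h3 | h3 <;>
      first | exact ⟨h1, h2, h3⟩ | norm_num [h1, h2, h3] at hdet
  have hnorm : ⟪a + b + c, a + b + c⟫ = 0 := by
    simp only [inner_add_left, inner_add_right, real_inner_comm a b, real_inner_comm a c,
      real_inner_comm b c, ha, hb, hc, hoff]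
    norm_num
  exact inner_self_eq_zero.1 hnorm

theorem sum_triple {M : Type*} [AddCommMonoid M] [DecidableEq M] {a b c : M} (hab : a ≠ b)
    (hac : a ≠ c) (hbc : b ≠ c) : ∑ x ∈ {a, b, c}, x = a + b + c := by
  rw [sum_insert (by simp [hab, hac]), sum_pair hbc, add_assoc]

def coordScale (i : Fin 6) : ℝ := if i = 0 then √3 / 6 else 1 / 2

def embed : (Fin 6 → ℤ) →+ E6V where
  toFun q := toE fun i => q i * coordScale i
  map_zero' := by ext i; simp [toE]
  map_add' p q := by ext i; simp [toE, add_mul]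

theorem embed_apply (q : Fin 6 → ℤ) (i : Fin 6) : embed q i = q i * coordScale i := rfl

def bform (p q : Fin 6 → ℤ) : ℤ := ∑ i, (if i = 0 then 1 else 3) * p i * q i

def zReflect (v x : Fin 6 → ℤ) : Fin 6 → ℤ := x - (2 * bform x v / bform v v) • v

theorem inner_embed (p q : Fin 6 → ℤ) : ⟪embed p, embed q⟫ = bform p q / 12 := by
  simp only [PiLp.inner_apply, embed_apply, RCLike.inner_apply, conj_trivial, bform]
  push_cast
  rw [Finset.sum_div]
  refine Finset.sum_congr rfl fun i _ => ?_
  rcases eq_or_ne i 0 with rfl | hi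
  · simp only [coordScale, if_true]
    ring_nf
    rw [Real.sq_sqrt (by norm_num)]
    ring
  · simp only [coordScale, hi, if_false]
    ring

theorem embed_injective : Function.Injective embed := by
  intro p q h
  funext i
  have hi := congrArg (· i) h
  simp only [embed_apply] at hi
  have hs : coordScale i ≠ 0 := by unfold coordScale; split_ifs <;> positivity
  exact_mod_cast mul_right_cancel₀ hs hi

theorem reflectIn_embed {v x : Fin 6 → ℤ} (h : bform v v ∣ 2 * bform x v) :
    reflectIn (embed v) (embed x) = embed (zReflect v x) := by
  have hcoef : 2 * ⟪embed x, embed v⟫ / ⟪embed v, embed v⟫ =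
      ((2 * bform x v / bform v v : ℤ) : ℝ) := by
    rcases eq_or_ne (bform v v) 0 with h0 | h0
    · rw [inner_embed, inner_embed, h0, Int.ediv_zero]; simp
    · rw [inner_embed, inner_embed, Int.cast_div h (by exact_mod_cast h0)]
      push_cast
      field_simp
  rw [reflectIn, zReflect, map_sub, map_zsmul, hcoef, Int.cast_smul_eq_zsmul]

theorem embed_single_two {i : Fin 6} (hi : i ≠ 0) : embed (Pi.single i 2) = stdE i := by
  ext k
  rcases eq_or_ne k i with rfl | hk
  · simp [embed_apply, stdE, coordScale, hi]
  · simp [embed_apply, stdE, hk]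

theorem embed_cons_three (s : Fin 5 → ℤ) :
    embed (Fin.cons 3 s) = toE (Fin.cons (√3 / 2) fun k => (s k : ℝ) / 2) := by
  ext k
  refine Fin.cases ?_ (fun k => ?_) k
  · simp [embed_apply, toE, coordScale]; ring
  · simp [embed_apply, toE, coordScale]; ring

def zMu : Fin 6 → ℤ := ![4, 0, 0, 0, 0, 0]

theorem embed_zMu : embed zMu = muE6 := by
  ext k
  fin_cases k <;> simp [embed_apply, muE6, toE, zMu, coordScale]; ring

def zPosRoots : Finset (Fin 6 → ℤ) :=
  ((univ.filter fun p : Fin 6 × Fin 6 => 0 < (p.1 : ℕ) ∧ p.1 < p.2).biUnion fun p =>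
      {Pi.single p.1 2 + Pi.single p.2 2, Pi.single p.1 2 - Pi.single p.2 2}) ∪
    ((Fintype.piFinset fun _ => ({1, -1} : Finset ℤ)).filter
      fun s => Even #{k | s k = -1}).image (Fin.cons 3)

def zRoots : Finset (Fin 6 → ℤ) := zPosRoots ∪ -zPosRoots

theorem card_filter_intCast_eq_neg_one {ι : Type*} [Fintype ι] (t : ι → ℤ) :
    #{k | (t k : ℝ) = -1} = #{k | t k = -1} := by
  congr 1
  ext k
  simp only [mem_filter, mem_univ, true_and]
  norm_cast

theorem image_embed_zPosRoots : embed '' zPosRoots = PhiPlus := by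
  rw [zPosRoots, coe_union, Set.image_union, PhiPlus]
  congr 1
  · ext v
    simp only [coe_biUnion, coe_filter, mem_univ, true_and, Set.mem_ofPred_eq, coe_insert,
      coe_singleton, Set.image_iUnion₂, Set.image_insert_eq, Set.image_singleton,
      Set.mem_iUnion, Set.mem_insert_iff, Set.mem_singleton_iff, Prod.exists, exists_prop,
      and_assoc]
    refine exists₂_congr fun i j => and_congr_right fun hi => and_congr_right fun hij => ?_
    have hi0 : i ≠ 0 := Fin.pos_iff_ne_zero.1 hi
    have hj0 : j ≠ 0 := Fin.pos_iff_ne_zero.1 (lt_trans hi hij)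
    simp only [map_add, map_sub, embed_single_two hi0, embed_single_two hj0]
  · ext v
    simp only [coe_image, coe_filter, Fintype.mem_piFinset, mem_insert, mem_singleton,
      Set.mem_image, Set.mem_ofPred_eq]
    constructor
    · rintro ⟨_, ⟨t, ⟨ht, heven⟩, rfl⟩, rfl⟩
      refine ⟨fun k => t k, fun k => ?_, ?_, embed_cons_three t⟩
      · rcases ht k with h | h <;> simp [h]
      · rwa [card_filter_intCast_eq_neg_one]
    · rintro ⟨s, hs, heven, rfl⟩
      have hint : ∀ k, ∃ n : ℤ, (n : ℝ) = s k := fun k => by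
        rcases hs k with h | h
        · exact ⟨1, by simp [h]⟩
        · exact ⟨-1, by simp [h]⟩
      choose t ht using hint
      have hts : (fun k => (t k : ℝ)) = s := funext ht
      subst hts
      beta_reduce at hs heven
      refine ⟨Fin.cons 3 t, ⟨t, ⟨fun k => ?_, ?_⟩, rfl⟩, embed_cons_three t⟩
      · exact (hs k).imp (fun h => by exact_mod_cast h) (fun h => by exact_mod_cast h)
      · rwa [← card_filter_intCast_eq_neg_one]

theorem image_embed_zRoots : embed '' zRoots = Phi := by
  rw [zRoots, coe_union, coe_neg, Set.image_union, Set.image_neg, image_embed_zPosRoots, Phi]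

def zWeights : Finset (Fin 6 → ℤ) :=
  {![4, 0, 0, 0, 0, 0],
    ![-2, 2, 0, 0, 0, 0], ![-2, 0, 2, 0, 0, 0], ![-2, 0, 0, 2, 0, 0], ![-2, 0, 0, 0, 2, 0],
    ![-2, 0, 0, 0, 0, 2], ![-2, -2, 0, 0, 0, 0], ![-2, 0, -2, 0, 0, 0], ![-2, 0, 0, -2, 0, 0],
    ![-2, 0, 0, 0, -2, 0], ![-2, 0, 0, 0, 0, -2],
    ![1, 1, 1, 1, 1, -1], ![1, 1, 1, 1, -1, 1], ![1, 1, 1, -1, 1, 1], ![1, 1, -1, 1, 1, 1],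
    ![1, -1, 1, 1, 1, 1], ![1, 1, 1, -1, -1, -1], ![1, 1, -1, 1, -1, -1], ![1, 1, -1, -1, 1, -1],
    ![1, 1, -1, -1, -1, 1], ![1, -1, 1, 1, -1, -1], ![1, -1, 1, -1, 1, -1],
    ![1, -1, 1, -1, -1, 1], ![1, -1, -1, 1, 1, -1], ![1, -1, -1, 1, -1, 1],
    ![1, -1, -1, -1, 1, 1], ![1, -1, -1, -1, -1, -1]}

def zZeroSumTriples : Finset (Finset (Fin 6 → ℤ)) :=
  {t ∈ zWeights.powersetCard 3 | ∑ x ∈ t, x = 0}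

theorem zMu_mem_zWeights : zMu ∈ zWeights := by decide +kernel

theorem zReflect_mem_zWeights :
    ∀ v ∈ zRoots, ∀ x ∈ zWeights, bform v v ∣ 2 * bform x v ∧ zReflect v x ∈ zWeights := by
  decide +kernel

theorem exists_zReflect_zReflect_zMu_eq :
    ∀ x ∈ zWeights, ∃ v ∈ zRoots, ∃ w ∈ zRoots, zReflect v (zReflect w zMu) = x := by
  decide +kernel

theorem card_zWeights : #zWeights = 27 := by decide +kernel

theorem bform_self_of_mem_zWeights : ∀ a ∈ zWeights, bform a a = 16 := by decide +kernel

theorem bform_of_mem_zWeights_of_ne :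
    ∀ a ∈ zWeights, ∀ b ∈ zWeights, a ≠ b → bform a b = 4 ∨ bform a b = -8 := by
  decide +kernel

theorem card_zZeroSumTriples : #zZeroSumTriples = 45 := by decide +kernel

theorem image_embed_zWeights : embed '' zWeights = SigmaE6 := by
  have hrefl : ∀ v ∈ Phi, ∀ x ∈ embed '' zWeights, reflectIn v x ∈ embed '' zWeights := by
    rw [← image_embed_zRoots]
    rintro _ ⟨v, hv, rfl⟩ _ ⟨x, hx, rfl⟩
    obtain ⟨hdvd, hmem⟩ := zReflect_mem_zWeights v hv x hx
    exact ⟨_, hmem, (reflectIn_embed hdvd).symm⟩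
  have hmu : muE6 ∈ embed '' zWeights := ⟨zMu, zMu_mem_zWeights, embed_zMu⟩
  ext x
  constructor
  · rintro ⟨x, hx, rfl⟩
    obtain ⟨v, hv, w, hw, rfl⟩ := exists_zReflect_zReflect_zMu_eq x hx
    have hwμ := zReflect_mem_zWeights w hw zMu zMu_mem_zWeights
    refine Or.inr ⟨embed v, image_embed_zRoots ▸ ⟨v, hv, rfl⟩, embed w,
      image_embed_zRoots ▸ ⟨w, hw, rfl⟩, ?_⟩
    rw [← embed_zMu, reflectIn_embed hwμ.1,
      reflectIn_embed (zReflect_mem_zWeights v hv _ hwμ.2).1]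
  · rintro ((rfl | ⟨v, hv, rfl⟩) | ⟨v, hv, w, hw, rfl⟩)
    · exact hmu
    · exact hrefl v hv _ hmu
    · exact hrefl v hv _ (hrefl w hw _ hmu)

theorem ncard_SigmaE6 : SigmaE6.ncard = 27 := by
  rw [← image_embed_zWeights, Set.ncard_image_of_injective _ embed_injective,
    Set.ncard_coe_finset, card_zWeights]

theorem finite_SigmaE6 : SigmaE6.Finite := image_embed_zWeights ▸ (zWeights.finite_toSet.image _)

theorem inner_self_of_mem_SigmaE6 {x : E6V} (hx : x ∈ SigmaE6) : ⟪x, x⟫ = 4 / 3 := by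
  rw [← image_embed_zWeights] at hx
  obtain ⟨a, ha, rfl⟩ := hx
  rw [inner_embed, bform_self_of_mem_zWeights a ha]
  norm_num

theorem inner_of_mem_SigmaE6_of_ne {x y : E6V} (hx : x ∈ SigmaE6) (hy : y ∈ SigmaE6)
    (hxy : x ≠ y) : ⟪x, y⟫ = 1 / 3 ∨ ⟪x, y⟫ = -2 / 3 := by
  rw [← image_embed_zWeights] at hx hy
  obtain ⟨a, ha, rfl⟩ := hx
  obtain ⟨b, hb, rfl⟩ := hy
  rw [inner_embed]
  rcases bform_of_mem_zWeights_of_ne a ha b hb (ne_of_apply_ne _ hxy) with h | h <;>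
    norm_num [h]

theorem finrank_span_le_two_iff_of_mem_SigmaE6 {a b c : E6V} (ha : a ∈ SigmaE6)
    (hb : b ∈ SigmaE6) (hc : c ∈ SigmaE6) (hab : a ≠ b) (hac : a ≠ c) (hbc : b ≠ c) :
    finrank ℝ (span ℝ ({a, b, c} : Set E6V)) ≤ 2 ↔ a + b + c = 0 :=
  ⟨add_add_eq_zero_of_finrank_span_le_two (inner_self_of_mem_SigmaE6 ha)
    (inner_self_of_mem_SigmaE6 hb) (inner_self_of_mem_SigmaE6 hc)
    (inner_of_mem_SigmaE6_of_ne ha hb hab) (inner_of_mem_SigmaE6_of_ne ha hc hac)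
    (inner_of_mem_SigmaE6_of_ne hb hc hbc), finrank_span_triple_le_two_of_add_add_eq_zero⟩

theorem setOf_finrank_span_le_two_eq :
    {s : Set E6V | s ⊆ SigmaE6 ∧ s.ncard = 3 ∧ finrank ℝ (span ℝ s) ≤ 2} =
      (fun t : Finset (Fin 6 → ℤ) => embed '' ↑t) '' zZeroSumTriples := by
  ext s
  constructor
  · rintro ⟨hs, hcard, hrank⟩
    obtain ⟨x, y, z, hxy, hxz, hyz, rfl⟩ := Set.ncard_eq_three.1 hcard
    have hsum := (finrank_span_le_two_iff_of_mem_SigmaE6 (hs (by simp)) (hs (by simp))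
      (hs (by simp)) hxy hxz hyz).1 hrank
    rw [← image_embed_zWeights, Set.insert_subset_iff, Set.insert_subset_iff,
      Set.singleton_subset_iff] at hs
    obtain ⟨⟨a, ha, rfl⟩, ⟨b, hb, rfl⟩, ⟨c, hc, rfl⟩⟩ := hs
    have hab := ne_of_apply_ne embed hxy
    have hac := ne_of_apply_ne embed hxz
    have hbc := ne_of_apply_ne embed hyz
    refine ⟨{a, b, c}, ?_, by simp [Set.image_insert_eq]⟩
    simp only [zZeroSumTriples, coe_filter, mem_powersetCard, Set.mem_ofPred_eq,
      insert_subset_iff, singleton_subset_iff, sum_triple hab hac hbc]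
    refine ⟨⟨⟨ha, hb, hc⟩, card_eq_three.2 ⟨a, b, c, hab, hac, hbc, rfl⟩⟩, embed_injective ?_⟩
    rwa [map_add, map_add, map_zero]
  · rintro ⟨t, ht, rfl⟩
    simp only [zZeroSumTriples, coe_filter, mem_powersetCard, Set.mem_ofPred_eq] at ht
    obtain ⟨⟨hsub, hcard⟩, hsum⟩ := ht
    refine ⟨image_embed_zWeights ▸ Set.image_mono (coe_subset.2 hsub), ?_, ?_⟩
    · rw [Set.ncard_image_of_injective _ embed_injective, Set.ncard_coe_finset, hcard]
    · obtain ⟨a, b, c, hab, hac, hbc, rfl⟩ := card_eq_three.1 hcard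
      rw [sum_triple hab hac hbc] at hsum
      have himage : embed '' ↑({a, b, c} : Finset _) = {embed a, embed b, embed c} := by
        simp [Set.image_insert_eq]
      beta_reduce
      rw [himage]
      refine finrank_span_triple_le_two_of_add_add_eq_zero ?_
      rw [← map_add, ← map_add, hsum, map_zero]

/-- Among the 2925 three-element subsets of `Σ`, exactly 45 span a subspace of
dimension at most 2, and every such triple `{a, b, c}` satisfies `a + b + c = 0`. -/
theorem e6_sigma_triples :
    {s : Set E6V | s ⊆ SigmaE6 ∧ s.ncard = 3}.ncard = 2925 ∧
    {s : Set E6V | s ⊆ SigmaE6 ∧ s.ncard = 3 ∧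
        Module.finrank ℝ (Submodule.span ℝ s) ≤ 2}.ncard = 45 ∧
    ∀ a b c : E6V, a ∈ SigmaE6 → b ∈ SigmaE6 → c ∈ SigmaE6 →
      a ≠ b → a ≠ c → b ≠ c →
      Module.finrank ℝ (Submodule.span ℝ ({a, b, c} : Set E6V)) ≤ 2 →
      a + b + c = 0 := by
  refine ⟨?_, ?_, ?_⟩
  · rw [Set.ncard_powerset_ncard finite_SigmaE6, ncard_SigmaE6]
    rfl
  · have hinj : Function.Injective fun t : Finset (Fin 6 → ℤ) => embed '' ↑t :=
      (Set.image_injective.2 embed_injective).comp coe_injective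
    rw [setOf_finrank_span_le_two_eq, Set.ncard_image_of_injective _ hinj, Set.ncard_coe_finset,
      card_zZeroSumTriples]
  · intro a b c ha hb hc hab hac hbc
    exact (finrank_span_le_two_iff_of_mem_SigmaE6 ha hb hc hab hac hbc).1

end
end

section
/- The set Σ spans ℝ^6, and moreover every subset of Σ with 26 elements spans all of ℝ^6 (a six-dimensional subspace). -/
noncomputable section

/-!
In coordinates scaled by `6`, with the first one measured in units of `√3`, the roots and the
weights become integer vectors. A finite computation shows that the 27 vectors `μ`, `(-2, ±6 eᵢ)`
and `(1, ±3, …, ±3)` with an odd number of minus signs are mapped among themselves by every root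
reflection, so `Σ` lies among them. They contain two disjoint bases of `ℝ⁶`,
`{μ} ∪ {(-2, 6 eᵢ)}` and `{(1, -3, …, -3)} ∪ {(-2, -6 eᵢ)}`, the second of which lies in `Σ`;
a 26-element subset of `Σ` misses at most one of the 27 vectors, hence contains one of the bases.
-/

theorem Set.subset_or_subset_of_ncard_le_add_one {α : Type*} {t s a b : Set α} (ht : t.Finite)
    (hs : s ⊆ t) (ha : a ⊆ t) (hb : b ⊆ t) (hab : Disjoint a b) (hcard : t.ncard ≤ s.ncard + 1) :
    a ⊆ s ∨ b ⊆ s := by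
  by_contra! h
  obtain ⟨⟨x, hxa, hxs⟩, ⟨y, hyb, hys⟩⟩ := Set.not_subset.1 h.1, Set.not_subset.1 h.2
  have hdiff : (t \ s).ncard ≤ 1 := by
    have := Set.ncard_sdiff_add_ncard_of_subset hs ht
    omega
  exact hab.ne_of_mem hxa hyb <|
    (Set.ncard_le_one_iff (ht.subset Set.sdiff_subset)).1 hdiff ⟨ha hxa, hxs⟩ ⟨hb hyb, hys⟩

namespace E6

lemma reflectIn_neg (v x : E6V) : reflectIn (-v) x = reflectIn v x := by
  simp only [reflectIn, inner_neg_right, inner_neg_left, neg_neg, mul_neg, neg_div, smul_neg,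
    neg_smul]

/-- Integer coordinates for the lattice containing `Φ` and `Σ`: `a` stands for the vector
with coordinates `a i / 6`, except that the first one is measured in units of `√3 / 6`. -/
def ofInt : (Fin 6 → ℤ) →+ E6V where
  toFun a := toE fun i => (a i : ℝ) / 6 * if i = 0 then √3 else 1
  map_zero' := by ext i; simp [toE]
  map_add' a b := by
    ext i
    change ((a + b) i : ℝ) / 6 * _ = (a i : ℝ) / 6 * _ + (b i : ℝ) / 6 * _
    simp only [Pi.add_apply, Int.cast_add]
    ring

lemma ofInt_apply (a : Fin 6 → ℤ) (i : Fin 6) :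
    ofInt a i = (a i : ℝ) / 6 * if i = 0 then √3 else 1 := rfl

def zinner (a b : Fin 6 → ℤ) : ℤ :=
  3 * a 0 * b 0 + a 1 * b 1 + a 2 * b 2 + a 3 * b 3 + a 4 * b 4 + a 5 * b 5

lemma inner_ofInt (a b : Fin 6 → ℤ) :
    inner ℝ (ofInt a) (ofInt b) = (zinner a b : ℝ) / 36 := by
  have h3 : √3 * √3 = 3 := Real.mul_self_sqrt (by norm_num)
  simp only [PiLp.inner_apply, RCLike.inner_apply, conj_trivial, Fin.sum_univ_six, ofInt_apply,
    zinner]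
  simp only [Fin.isValue, ↓reduceIte, Fin.reduceEq, mul_one, Int.cast_add, Int.cast_mul,
    Int.cast_ofNat]
  linear_combination (a 0 * b 0 / 36 : ℝ) * h3

lemma ofInt_injective : Function.Injective ofInt := by
  refine (injective_iff_map_eq_zero ofInt).2 fun a ha => funext fun i => ?_
  have hi := congrArg (· i) ha
  rw [ofInt_apply, PiLp.zero_apply] at hi
  split_ifs at hi <;> simpa using hi

lemma reflectIn_ofInt {v : Fin 6 → ℤ} (hv : zinner v v = 72) {x : Fin 6 → ℤ} {c : ℤ}
    (hc : zinner x v = 36 * c) : reflectIn (ofInt v) (ofInt x) = ofInt (x - c • v) := by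
  rw [reflectIn, inner_ofInt, inner_ofInt, hv, hc, map_sub, map_zsmul, ← Int.cast_smul_eq_zsmul ℝ]
  congr 2
  push_cast
  ring

def posRootsZ : List (Fin 6 → ℤ) := [
  ![0, 6, 6, 0, 0, 0], ![0, 6, -6, 0, 0, 0], ![0, 6, 0, 6, 0, 0], ![0, 6, 0, -6, 0, 0],
  ![0, 6, 0, 0, 6, 0], ![0, 6, 0, 0, -6, 0], ![0, 6, 0, 0, 0, 6], ![0, 6, 0, 0, 0, -6],
  ![0, 0, 6, 6, 0, 0], ![0, 0, 6, -6, 0, 0], ![0, 0, 6, 0, 6, 0], ![0, 0, 6, 0, -6, 0],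
  ![0, 0, 6, 0, 0, 6], ![0, 0, 6, 0, 0, -6], ![0, 0, 0, 6, 6, 0], ![0, 0, 0, 6, -6, 0],
  ![0, 0, 0, 6, 0, 6], ![0, 0, 0, 6, 0, -6], ![0, 0, 0, 0, 6, 6], ![0, 0, 0, 0, 6, -6],
  ![3, 3, 3, 3, 3, 3], ![3, 3, 3, 3, -3, -3], ![3, 3, 3, -3, 3, -3], ![3, 3, 3, -3, -3, 3],
  ![3, 3, -3, 3, 3, -3], ![3, 3, -3, 3, -3, 3], ![3, 3, -3, -3, 3, 3], ![3, 3, -3, -3, -3, -3],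
  ![3, -3, 3, 3, 3, -3], ![3, -3, 3, 3, -3, 3], ![3, -3, 3, -3, 3, 3], ![3, -3, 3, -3, -3, -3],
  ![3, -3, -3, 3, 3, 3], ![3, -3, -3, 3, -3, -3], ![3, -3, -3, -3, 3, -3], ![3, -3, -3, -3, -3, 3]]

def weightsZ : List (Fin 6 → ℤ) := [
  ![4, 0, 0, 0, 0, 0],
  ![-2, 6, 0, 0, 0, 0], ![-2, 0, 6, 0, 0, 0], ![-2, 0, 0, 6, 0, 0], ![-2, 0, 0, 0, 6, 0],
  ![-2, 0, 0, 0, 0, 6], ![-2, -6, 0, 0, 0, 0], ![-2, 0, -6, 0, 0, 0], ![-2, 0, 0, -6, 0, 0],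
  ![-2, 0, 0, 0, -6, 0], ![-2, 0, 0, 0, 0, -6],
  ![1, -3, -3, -3, -3, -3], ![1, -3, -3, -3, 3, 3], ![1, -3, -3, 3, -3, 3], ![1, -3, -3, 3, 3, -3],
  ![1, -3, 3, -3, -3, 3], ![1, -3, 3, -3, 3, -3], ![1, -3, 3, 3, -3, -3], ![1, -3, 3, 3, 3, 3],
  ![1, 3, -3, -3, -3, 3], ![1, 3, -3, -3, 3, -3], ![1, 3, -3, 3, -3, -3], ![1, 3, -3, 3, 3, 3],
  ![1, 3, 3, -3, -3, -3], ![1, 3, 3, -3, 3, 3], ![1, 3, 3, 3, -3, 3], ![1, 3, 3, 3, 3, -3]]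

lemma zinner_self_of_mem_posRootsZ : ∀ v ∈ posRootsZ, zinner v v = 72 := by decide +kernel

/-- Bounding `c` makes this decidable; that `c ∈ {-1, 0, 1}` is the minuscule property. -/
lemma exists_reflection_mem_weightsZ : ∀ x ∈ weightsZ, ∀ v ∈ posRootsZ,
    ∃ c ∈ [-1, 0, 1], zinner x v = 36 * c ∧ x - c • v ∈ weightsZ := by decide +kernel

lemma ofInt_single (i : Fin 6) (k : ℤ) :
    ofInt (Pi.single i k) = ((k : ℝ) / 6 * if i = 0 then √3 else 1) • stdE i := by
  ext j
  rw [ofInt_apply, PiLp.smul_apply, stdE, PiLp.single_apply]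
  by_cases h : j = i
  · subst h; simp
  · simp [h]

def spinorZ (b : Fin 5 → Bool) : Fin 6 → ℤ := Fin.cons 3 fun k => if b k then -3 else 3

lemma ofInt_spinorZ (b : Fin 5 → Bool) :
    ofInt (spinorZ b) = toE (Fin.cons (√3 / 2) fun k => (if b k then -1 else 1) / 2) := by
  ext j
  induction j using Fin.cases with
  | zero => simp [ofInt_apply, spinorZ, toE]; ring
  | succ k => simp [ofInt_apply, spinorZ, toE]; split_ifs <;> norm_num

lemma spinorZ_mem_posRootsZ (b : Fin 5 → Bool)
    (hb : Even (Finset.univ.filter fun k => b k).card) : spinorZ b ∈ posRootsZ := by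
  -- the kernel does not get through the `Fintype` enumeration of `Fin 5 → Bool`
  have key : ∀ b₀ b₁ b₂ b₃ b₄ : Bool,
      Even (Finset.univ.filter fun k => ![b₀, b₁, b₂, b₃, b₄] k).card →
      spinorZ ![b₀, b₁, b₂, b₃, b₄] ∈ posRootsZ := by decide +kernel
  have hb' : b = ![b 0, b 1, b 2, b 3, b 4] := by funext k; fin_cases k <;> rfl
  rw [hb'] at hb ⊢
  exact key _ _ _ _ _ hb

lemma single_add_single_mem_posRootsZ : ∀ i j : Fin 6, 0 < (i : ℕ) → i < j →
    Pi.single i 6 + Pi.single j 6 ∈ posRootsZ := by decide +kernel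

lemma single_sub_single_mem_posRootsZ : ∀ i j : Fin 6, 0 < (i : ℕ) → i < j →
    Pi.single i 6 - Pi.single j 6 ∈ posRootsZ := by decide +kernel

lemma exists_posRootsZ_of_mem_phiPlus {v : E6V} (hv : v ∈ PhiPlus) :
    ∃ r ∈ posRootsZ, ofInt r = v := by
  rcases hv with ⟨i, j, hi, hij, hv⟩ | ⟨s, hs, heven, rfl⟩
  · have hstd : ∀ k : Fin 6, 0 < (k : ℕ) → ofInt (Pi.single k (6 : ℤ)) = stdE k := fun k hk => by
      rw [ofInt_single, if_neg (Fin.pos_iff_ne_zero.1 hk)]; norm_num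
    rcases hv with rfl | rfl
    · exact ⟨_, single_add_single_mem_posRootsZ i j hi hij,
        by rw [map_add, hstd i hi, hstd j (hi.trans hij)]⟩
    · exact ⟨_, single_sub_single_mem_posRootsZ i j hi hij,
        by rw [map_sub, hstd i hi, hstd j (hi.trans hij)]⟩
  · set b : Fin 5 → Bool := fun k => decide (s k = -1)
    have hsb : ∀ k, (if b k then -1 else 1) = s k := fun k => by
      rcases hs k with h | h <;> norm_num [b, h]
    refine ⟨spinorZ b, spinorZ_mem_posRootsZ b ?_, by simp only [ofInt_spinorZ, hsb]⟩
    simpa [b] using heven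

lemma ofInt_spinorZ_mem_phiPlus (b : Fin 5 → Bool)
    (hb : Even (Finset.univ.filter fun k => b k).card) : ofInt (spinorZ b) ∈ PhiPlus :=
  Or.inr ⟨fun k => if b k then -1 else 1, fun k => by dsimp only; split_ifs <;> simp,
    by convert hb using 4 with k; cases hbk : b k <;> norm_num [hbk], ofInt_spinorZ b⟩

def weights : Set E6V := {x | x ∈ weightsZ.map ofInt}

lemma reflectIn_mem_weights {v : E6V} (hv : v ∈ Phi) {x : E6V} (hx : x ∈ weights) :
    reflectIn v x ∈ weights := by
  have key : ∀ w ∈ PhiPlus, reflectIn w x ∈ weights := by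
    intro w hw
    obtain ⟨r, hr, rfl⟩ := exists_posRootsZ_of_mem_phiPlus hw
    obtain ⟨a, ha, rfl⟩ := List.mem_map.1 hx
    obtain ⟨c, -, hc, hmem⟩ := exists_reflection_mem_weightsZ a ha r hr
    rw [reflectIn_ofInt (zinner_self_of_mem_posRootsZ r hr) hc]
    exact List.mem_map_of_mem hmem
  rcases hv with hv | hv
  · exact key v hv
  · rw [← neg_neg v, reflectIn_neg]
    exact key _ hv

lemma muE6_eq : muE6 = ofInt ![4, 0, 0, 0, 0, 0] := by
  ext i; fin_cases i <;> simp [muE6, toE, ofInt_apply]; ring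

lemma muE6_mem_weights : muE6 ∈ weights := by
  rw [muE6_eq]; exact List.mem_map_of_mem (by decide)

lemma sigmaE6_subset_weights : SigmaE6 ⊆ weights := by
  rintro x ((rfl | ⟨v, hv, rfl⟩) | ⟨v, hv, w, hw, rfl⟩)
  · exact muE6_mem_weights
  · exact reflectIn_mem_weights hv muE6_mem_weights
  · exact reflectIn_mem_weights hv (reflectIn_mem_weights hw muE6_mem_weights)

lemma ncard_weights_le : weights.ncard ≤ 27 := by
  classical
  rw [weights, ← List.coe_toFinset, Set.ncard_coe_finset]
  exact (List.toFinset_card_le _).trans (by simp [weightsZ])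

lemma span_eq_top_of_stdE_mem {s : Set E6V} (h : ∀ i, stdE i ∈ Submodule.span ℝ s) :
    Submodule.span ℝ s = ⊤ := by
  rw [eq_top_iff, ← (EuclideanSpace.basisFun (Fin 6) ℝ).toBasis.span_eq, Submodule.span_le]
  rintro x ⟨i, rfl⟩
  simpa [OrthonormalBasis.coe_toBasis, EuclideanSpace.basisFun_apply, stdE] using h i

lemma ofInt_mem_span {S : Set (Fin 6 → ℤ)} {a : Fin 6 → ℤ} (ha : a ∈ Submodule.span ℤ S) :
    ofInt a ∈ Submodule.span ℝ (ofInt '' S) := by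
  induction ha using Submodule.span_induction with
  | mem x hx => exact Submodule.subset_span ⟨x, hx, rfl⟩
  | zero => simp
  | add x y _ _ hx hy => rw [map_add]; exact add_mem hx hy
  | smul c x _ hx => rw [map_zsmul]; exact zsmul_mem hx c

lemma span_ofInt_eq_top {S : Set (Fin 6 → ℤ)}
    (h : ∀ i, ∃ k ≠ 0, Pi.single i k ∈ Submodule.span ℤ S) :
    Submodule.span ℝ (ofInt '' S) = ⊤ := by
  refine span_eq_top_of_stdE_mem fun i => ?_
  obtain ⟨k, hk, hmem⟩ := h i
  have hc : ((k : ℝ) / 6 * if i = 0 then √3 else 1) ≠ 0 := by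
    have : (k : ℝ) ≠ 0 := Int.cast_ne_zero.2 hk
    split_ifs <;> positivity
  have := ofInt_mem_span hmem
  rwa [ofInt_single, Submodule.smul_mem_iff _ hc] at this

def basisA : Fin 6 → Fin 6 → ℤ :=
  ![![4, 0, 0, 0, 0, 0], ![-2, 6, 0, 0, 0, 0], ![-2, 0, 6, 0, 0, 0], ![-2, 0, 0, 6, 0, 0],
    ![-2, 0, 0, 0, 6, 0], ![-2, 0, 0, 0, 0, 6]]

def basisB : Fin 6 → Fin 6 → ℤ :=
  ![![1, -3, -3, -3, -3, -3], ![-2, -6, 0, 0, 0, 0], ![-2, 0, -6, 0, 0, 0], ![-2, 0, 0, -6, 0, 0],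
    ![-2, 0, 0, 0, -6, 0], ![-2, 0, 0, 0, 0, -6]]

lemma span_ofInt_basisA : Submodule.span ℝ (ofInt '' Set.range basisA) = ⊤ := by
  have hmem : ∀ j, basisA j ∈ Submodule.span ℤ (Set.range basisA) :=
    fun j => Submodule.subset_span ⟨j, rfl⟩
  have hcomb : ∀ i, Pi.single i 12 = 2 • basisA i + basisA 0 := by decide +kernel
  exact span_ofInt_eq_top fun i =>
    ⟨12, by norm_num, hcomb i ▸ add_mem (nsmul_mem (hmem i) 2) (hmem 0)⟩

lemma span_ofInt_basisB : Submodule.span ℝ (ofInt '' Set.range basisB) = ⊤ := by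
  have hmem : ∀ j, basisB j ∈ Submodule.span ℤ (Set.range basisB) :=
    fun j => Submodule.subset_span ⟨j, rfl⟩
  have hzero : Pi.single 0 12 ∈ Submodule.span ℤ (Set.range basisB) := by
    have hcomb : Pi.single (0 : Fin 6) (12 : ℤ) = 3 • basisB 0 - ∑ j, basisB j := by
      decide +kernel
    rw [hcomb]
    exact sub_mem (nsmul_mem (hmem 0) 3) (Submodule.sum_mem _ fun j _ => hmem j)
  have hcomb : ∀ i ≠ 0, Pi.single i (-36) = 6 • basisB i + Pi.single 0 12 := by decide +kernel
  refine span_ofInt_eq_top fun i => ?_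
  rcases eq_or_ne i 0 with rfl | hi
  · exact ⟨12, by norm_num, hzero⟩
  · exact ⟨-36, by norm_num, hcomb i hi ▸ add_mem (nsmul_mem (hmem i) 6) hzero⟩

lemma disjoint_ofInt_basisA_basisB :
    Disjoint (ofInt '' Set.range basisA) (ofInt '' Set.range basisB) := by
  rw [Set.disjoint_image_iff ofInt_injective, Set.disjoint_range_iff]
  decide +kernel

lemma ofInt_basisA_subset_weights : ofInt '' Set.range basisA ⊆ weights := by
  rintro _ ⟨_, ⟨i, rfl⟩, rfl⟩
  exact List.mem_map_of_mem (by revert i; decide +kernel)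

lemma ofInt_basisB_subset_weights : ofInt '' Set.range basisB ⊆ weights := by
  rintro _ ⟨_, ⟨i, rfl⟩, rfl⟩
  exact List.mem_map_of_mem (by revert i; decide +kernel)

lemma ofInt_basisB_subset_sigmaE6 : ofInt '' Set.range basisB ⊆ SigmaE6 := by
  rintro _ ⟨_, ⟨i, rfl⟩, rfl⟩
  have hw : ofInt (spinorZ fun _ => false) ∈ Phi :=
    Or.inl (ofInt_spinorZ_mem_phiPlus _ (by decide))
  have h0 : reflectIn (ofInt (spinorZ fun _ => false)) muE6 = ofInt (basisB 0) := by
    rw [muE6_eq, reflectIn_ofInt (c := 1) (by decide) (by decide)]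
    congr 1
    decide +kernel
  rcases eq_or_ne i 0 with rfl | hi
  · exact Or.inl (Or.inr ⟨_, hw, h0.symm⟩)
  -- `basisB 0 - basisB i` is the spinor root whose only plus sign after the first is at `i`
  · obtain ⟨heven, hc, hsub⟩ :
        Even (Finset.univ.filter fun k : Fin 5 => decide (k.succ ≠ i)).card ∧
        zinner (basisB 0) (spinorZ fun k => k.succ ≠ i) = 36 * 1 ∧
        basisB 0 - (1 : ℤ) • spinorZ (fun k => k.succ ≠ i) = basisB i := by
      revert i; decide +kernel
    have hv := ofInt_spinorZ_mem_phiPlus _ heven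
    have hnorm := zinner_self_of_mem_posRootsZ _ (spinorZ_mem_posRootsZ _ heven)
    exact Or.inr ⟨_, Or.inl hv, _, hw, by rw [h0, reflectIn_ofInt hnorm hc, hsub]⟩

end E6

/-- `Σ` spans `ℝ⁶`, and every 26-element subset of `Σ` also spans all of `ℝ⁶`. -/
theorem e6_sigma_spans :
    Submodule.span ℝ SigmaE6 = ⊤ ∧
    ∀ s ⊆ SigmaE6, s.ncard = 26 → Submodule.span ℝ s = ⊤ := by
  refine ⟨top_unique ?_, fun s hs hcard => top_unique ?_⟩
  · rw [← E6.span_ofInt_basisB]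
    exact Submodule.span_mono E6.ofInt_basisB_subset_sigmaE6
  · rcases Set.subset_or_subset_of_ncard_le_add_one (List.finite_toSet _)
      (hs.trans E6.sigmaE6_subset_weights) E6.ofInt_basisA_subset_weights
      E6.ofInt_basisB_subset_weights E6.disjoint_ofInt_basisA_basisB
      (hcard ▸ E6.ncard_weights_le) with h | h
    · exact E6.span_ofInt_basisA ▸ Submodule.span_mono h
    · exact E6.span_ofInt_basisB ▸ Submodule.span_mono h

end
end

section
/- Let G be a finite group acting on a finite set X whose cardinality is a power of a prime p, and let P be a Sylow p-subgroup of G. Then G acts transitively on X if and only if P acts transitively on X. -/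
/-!
If `G` is transitive, the index of a point stabilizer is `|X| = p ^ k`. Since `p` does not
divide `[G : P]`, the multiplicativity of indices in `G ≥ P ≥ P ∩ Gₓ` forces `p ^ k` to divide
`[P : P ∩ Gₓ]`, which is the size of the `P`-orbit of `x`; so that orbit is all of `X`.
-/

theorem Sylow.pow_dvd_relIndex_of_pow_dvd_index {G : Type*} [Group G] {p : ℕ} [Fact p.Prime]
    (P : Sylow p G) [(P : Subgroup G).FiniteIndex] {H : Subgroup G} {n : ℕ}
    (h : p ^ n ∣ H.index) : p ^ n ∣ H.relIndex P := by
  have hcop : Nat.Coprime (p ^ n) (P : Subgroup G).index :=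
    ((Nat.Prime.coprime_iff_not_dvd Fact.out).mpr P.not_dvd_index).pow_left n
  refine hcop.dvd_of_dvd_mul_right ?_
  rw [← Subgroup.inf_relIndex_right, Subgroup.relIndex_mul_index inf_le_right]
  exact h.trans (Subgroup.index_dvd_of_le inf_le_left)

namespace MulAction

theorem stabilizer_subgroup_eq_subgroupOf {G X : Type*} [Group G] [MulAction G X]
    (H : Subgroup G) (x : X) : stabilizer H x = (stabilizer G x).subgroupOf H := by
  ext g
  simp [Subgroup.mem_subgroupOf, mem_stabilizer_iff, Subgroup.smul_def]

theorem ncard_orbit_subgroup_eq_relIndex {G X : Type*} [Group G] [MulAction G X]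
    (H : Subgroup G) (x : X) : (orbit H x).ncard = (stabilizer G x).relIndex H := by
  rw [← index_stabilizer, stabilizer_subgroup_eq_subgroupOf]
  rfl

theorem isPretransitive_of_card_dvd_ncard_orbit {G X : Type*} [Group G] [MulAction G X]
    [Finite X] (h : ∀ x : X, Nat.card X ∣ (orbit G x).ncard) : IsPretransitive G X := by
  refine ⟨fun x y ↦ ?_⟩
  have hle : Nat.card X ≤ (orbit G x).ncard :=
    Nat.le_of_dvd ((Set.ncard_pos (Set.toFinite _)).mpr ⟨x, mem_orbit_self x⟩) (h x)
  have huniv : orbit G x = Set.univ :=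
    Set.eq_of_subset_of_ncard_le (Set.subset_univ _) (by rwa [Set.ncard_univ])
  exact mem_orbit_iff.mp (huniv ▸ Set.mem_univ y)

end MulAction

/-- A finite group `G` acting on a finite set `X` of `p`-power cardinality acts
transitively if and only if a Sylow `p`-subgroup `P` of `G` acts transitively. -/
theorem isPretransitive_iff_sylow (G : Type*) [Group G] [Finite G]
    (X : Type*) [Finite X] [MulAction G X]
    (p : ℕ) [Fact p.Prime] (k : ℕ) (hX : Nat.card X = p ^ k)
    (P : Sylow p G) :
    MulAction.IsPretransitive G X ↔ MulAction.IsPretransitive (P : Subgroup G) X := by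
  refine ⟨fun _ ↦ MulAction.isPretransitive_of_card_dvd_ncard_orbit fun x ↦ ?_,
    fun _ ↦ MulAction.IsPretransitive.of_isScalarTower (P : Subgroup G)⟩
  rw [MulAction.ncard_orbit_subgroup_eq_relIndex, hX]
  apply P.pow_dvd_relIndex_of_pow_dvd_index
  rw [MulAction.index_stabilizer_of_transitive, hX]
end
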